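/- Conversely, if F ∈ ℂ[[w_1,w_2,w_3]] satisfies (1−w_1)∂F/∂w_1 + (1−w_2)∂F/∂w_2 + w_3(1−w_3)∂F/∂w_3 = (1+w_3)F, then there is a power series H(x,y) ∈ ℂ[[x,y]] with F(w_1,w_2,w_3) = H((w_1−w_2)/(1−w_2), w_3(1−w_2)/(1−w_3))/((1−w_2)(1−w_3)); explicitly H(x,y) = ((1)^2/(1+y))·F(x, 0, y/(1+y)) suitably interpreted, via the substitution H(x,y) = (1−z)^2/(1+y−z) · F(x+z−xz, z, y/(1+y−z)) evaluated at z = 0. -/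

import Mathlib

open MvPowerSeries

/-- Formal partial derivative of a power series in three variables. -/
noncomputable def pderiv3 (i : Fin 3) (F : MvPowerSeries (Fin 3) ℂ) :
    MvPowerSeries (Fin 3) ℂ :=
  fun m => ((m i : ℂ) + 1) * coeff (m + Finsupp.single i 1) F

/-- Composition `H(f,g)` of a two-variable power series `H` with two three-variable power
series `f`, `g` (intended for `f`, `g` with zero constant term, in which case the coefficient
of a monomial `m` only receives contributions from `f^i g^j` with `i + j ≤ deg m`). -/
noncomputable def comp2 (H : MvPowerSeries (Fin 2) ℂ) (f g : MvPowerSeries (Fin 3) ℂ) :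
    MvPowerSeries (Fin 3) ℂ :=
  fun m =>
    ∑ p ∈ Finset.range (m.sum (fun _ e => e) + 1) ×ˢ
        Finset.range (m.sum (fun _ e => e) + 1),
      coeff (Finsupp.single 0 p.1 + Finsupp.single 1 p.2) H *
        coeff m (f ^ p.1 * g ^ p.2)

/-- The power series `(w₁ - w₂)/(1 - w₂)`. -/
noncomputable def subx : MvPowerSeries (Fin 3) ℂ := (X 0 - X 1) * (1 - X 1)⁻¹

/-- The power series `w₃(1 - w₂)/(1 - w₃)`. -/
noncomputable def suby : MvPowerSeries (Fin 3) ℂ := X 2 * (1 - X 1) * (1 - X 2)⁻¹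

/-- `F(w₁,w₂,w₃) = H((w₁-w₂)/(1-w₂), w₃(1-w₂)/(1-w₃)) / ((1-w₂)(1-w₃))`. -/
noncomputable def FofH (H : MvPowerSeries (Fin 2) ℂ) : MvPowerSeries (Fin 3) ℂ :=
  ((1 - X 1) * (1 - X 2))⁻¹ * comp2 H subx suby

/-!
The operator `D = (1-w₁)∂₁ + (1-w₂)∂₂ + w₃(1-w₃)∂₃` is a derivation, it kills both substituted
series `(w₁-w₂)/(1-w₂)` and `w₃(1-w₂)/(1-w₃)` (their logarithmic derivatives cancel), and it
multiplies `((1-w₂)(1-w₃))⁻¹` by `1+w₃`; since `D` lowers the order by at most one, it kills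
`H(subx, suby)` too, so every `FofH H` solves the equation.

A solution is determined by its restriction to `w₂ = 0`: if `E` solves the equation and
`E = w₂^(j+1) G`, the equation divided by `w₂^j` reads `(j+1) G ≡ 0 (mod w₂)`, so `E = 0` once
`w₂ ∣ E`. Modulo `w₂` the series `FofH H` is `(1-w₃)⁻¹ H(w₁, w₃/(1-w₃))`, whose coefficients
depend on those of `H` through a unitriangular system, so `H` can be chosen with `w₂ ∣ F - FofH H`.
-/

open Finsupp

lemma Derivation.map_eq_neg_mul_of_mul_eq_one {R A : Type*} [CommRing R] [CommRing A]
    [Algebra R A] (D : Derivation R A A) {u v c : A} (huv : u * v = 1) (hu : D u = c * u) :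
    D v = -c * v := by
  have := D.leibniz_of_mul_eq_one (a := v) (b := u) (by rw [mul_comm, huv])
  rw [smul_eq_mul, hu] at this
  linear_combination this - c * v * huv

lemma one_sub_X_mul_inv {σ : Type*} (i : σ) :
    (1 - X i : MvPowerSeries σ ℂ) * (1 - X i)⁻¹ = 1 :=
  MvPowerSeries.mul_inv_cancel _ (by simp)

lemma le_order_pderiv {σ R : Type*} [CommSemiring R] (i : σ) {f : MvPowerSeries σ R} {n : ℕ}
    (hf : (n + 1 : ℕ∞) ≤ f.order) : (n : ℕ∞) ≤ (pderiv R i f).order := by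
  refine le_order fun d hd => ?_
  rw [coeff_pderiv, coeff_of_lt_order, zero_mul]
  refine lt_of_lt_of_le ?_ hf
  rw [map_add, degree_single]
  exact_mod_cast Nat.add_lt_add_right (by exact_mod_cast hd) 1

lemma coeff_pow_mul_pow_eq_zero {σ R : Type*} [CommSemiring R] {f g : MvPowerSeries σ R}
    (hf : constantCoeff f = 0) (hg : constantCoeff g = 0) {p q : ℕ} {d : σ →₀ ℕ}
    (hd : degree d < p + q) : coeff d (f ^ p * g ^ q) = 0 := by
  refine coeff_of_lt_order (lt_of_lt_of_le (b := (p : ℕ∞) + q) (by exact_mod_cast hd) ?_)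
  exact (add_le_add (le_order_pow_of_constantCoeff_eq_zero p hf)
    (le_order_pow_of_constantCoeff_eq_zero q hg)).trans le_order_mul

lemma eq_zero_of_forall_X_pow_dvd {σ R : Type*} [Semiring R] {s : σ} {φ : MvPowerSeries σ R}
    (h : ∀ n, X s ^ n ∣ φ) : φ = 0 := by
  ext m
  exact X_pow_dvd_iff.mp (h (m s + 1)) m (Nat.lt_succ_self _)

lemma coeff_eq_zero_of_pderiv_eq_zero {σ R : Type*} [CommRing R] [NoZeroDivisors R] [CharZero R]
    {s : σ} {ψ : MvPowerSeries σ R} (hψ : pderiv R s ψ = 0) {m : σ →₀ ℕ} (hm : m s ≠ 0) :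
    coeff m ψ = 0 := by
  have hle : single s 1 ≤ m := single_le_iff.mpr (Nat.one_le_iff_ne_zero.mpr hm)
  have h := congr_arg (coeff (m - single s 1)) hψ
  rw [coeff_pderiv, tsub_add_cancel_of_le hle, map_zero] at h
  exact (mul_eq_zero.mp h).resolve_right (Nat.cast_add_one_ne_zero _)

lemma coeff_X_pow_mul_of_pderiv_eq_zero {σ R : Type*} [CommRing R] [NoZeroDivisors R]
    [CharZero R] {s : σ} {ψ : MvPowerSeries σ R} (hψ : pderiv R s ψ = 0) (p i : ℕ)
    {n : σ →₀ ℕ} (hn : n s = 0) :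
    coeff (single s i + n) (X s ^ p * ψ) = if p = i then coeff n ψ else 0 := by
  classical
  rw [X_pow_eq, coeff_monomial_mul, one_mul]
  by_cases hpi : p ≤ i
  · have hsub : single s i + n - single s p = single s (i - p) + n := by
      ext t
      by_cases ht : t = s
      · subst ht; simp [hn]
      · simp [ht]
    rw [if_pos (le_add_right (single_le_single.mpr hpi)), hsub]
    split_ifs with hpi'
    · rw [hpi', Nat.sub_self, single_zero, zero_add]
    · exact coeff_eq_zero_of_pderiv_eq_zero hψ (by simp [hn]; omega)
  · rw [if_neg, if_neg (by omega)]
    intro hle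
    have := hle s
    simp [hn] at this
    omega

noncomputable def unitriangularSolve {K : Type*} [CommRing K] (c : ℕ → ℕ → K) (f : ℕ → K) :
    ℕ → K
  | k => f k - ∑ q : Fin k, unitriangularSolve c f q * c q k

lemma sum_range_unitriangularSolve_mul {K : Type*} [CommRing K] (c : ℕ → ℕ → K)
    (hc : ∀ k, c k k = 1) (f : ℕ → K) (k : ℕ) :
    ∑ q ∈ Finset.range (k + 1), unitriangularSolve c f q * c q k = f k := by
  rw [Finset.sum_range_succ, hc, mul_one, unitriangularSolve,
    Fin.sum_univ_eq_sum_range (fun q => unitriangularSolve c f q * c q k)]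
  ring

lemma pderiv3_eq_pderiv (i : Fin 3) (F : MvPowerSeries (Fin 3) ℂ) :
    pderiv3 i F = pderiv ℂ i F := by
  ext m
  rw [coeff_pderiv, mul_comm]
  rfl

noncomputable def pdeOp : Derivation ℂ (MvPowerSeries (Fin 3) ℂ) (MvPowerSeries (Fin 3) ℂ) :=
  (1 - X 0 : MvPowerSeries (Fin 3) ℂ) • pderiv ℂ 0 +
    (1 - X 1 : MvPowerSeries (Fin 3) ℂ) • pderiv ℂ 1 +
    (X 2 * (1 - X 2) : MvPowerSeries (Fin 3) ℂ) • pderiv ℂ 2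

lemma pdeOp_apply (f : MvPowerSeries (Fin 3) ℂ) :
    pdeOp f = (1 - X 0) * pderiv ℂ 0 f + (1 - X 1) * pderiv ℂ 1 f +
      X 2 * (1 - X 2) * pderiv ℂ 2 f := by
  simp only [pdeOp, Derivation.add_apply, Derivation.smul_apply, smul_eq_mul]

lemma pdeOp_X_zero : pdeOp (X 0) = (1 - X 0 : MvPowerSeries (Fin 3) ℂ) := by
  simp [pdeOp_apply]

lemma pdeOp_X_one : pdeOp (X 1) = (1 - X 1 : MvPowerSeries (Fin 3) ℂ) := by
  simp [pdeOp_apply]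

lemma pdeOp_X_two : pdeOp (X 2) = (X 2 * (1 - X 2) : MvPowerSeries (Fin 3) ℂ) := by
  simp [pdeOp_apply]

lemma le_order_pdeOp {f : MvPowerSeries (Fin 3) ℂ} {n : ℕ} (hf : (n + 1 : ℕ∞) ≤ f.order) :
    (n : ℕ∞) ≤ (pdeOp f).order := by
  have h : ∀ (a : MvPowerSeries (Fin 3) ℂ) i, (n : ℕ∞) ≤ (a * pderiv ℂ i f).order :=
    fun a i => (le_order_pderiv i hf).trans (le_add_self.trans le_order_mul)
  rw [pdeOp_apply]
  exact le_trans (le_min (le_trans (le_min (h _ 0) (h _ 1)) min_order_le_add) (h _ 2))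
    min_order_le_add

lemma pdeOp_one_sub_X_one : pdeOp (1 - X 1) = -(1 - X 1 : MvPowerSeries (Fin 3) ℂ) := by
  rw [map_sub, Derivation.map_one_eq_zero, pdeOp_X_one, zero_sub]

lemma pdeOp_one_sub_X_two :
    pdeOp (1 - X 2) = -X 2 * (1 - X 2 : MvPowerSeries (Fin 3) ℂ) := by
  rw [map_sub, Derivation.map_one_eq_zero, pdeOp_X_two, zero_sub, neg_mul]

lemma pdeOp_inv_one_sub_X_one : pdeOp (1 - X 1)⁻¹ = ((1 - X 1)⁻¹ : MvPowerSeries (Fin 3) ℂ) := by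
  rw [pdeOp.map_eq_neg_mul_of_mul_eq_one (one_sub_X_mul_inv 1) (c := -1)
    (by rw [pdeOp_one_sub_X_one, neg_one_mul]), neg_neg, one_mul]

lemma pdeOp_inv_one_sub_X_two :
    pdeOp (1 - X 2)⁻¹ = X 2 * ((1 - X 2)⁻¹ : MvPowerSeries (Fin 3) ℂ) := by
  rw [pdeOp.map_eq_neg_mul_of_mul_eq_one (one_sub_X_mul_inv 2) pdeOp_one_sub_X_two, neg_neg]

lemma pdeOp_subx : pdeOp subx = 0 := by
  rw [subx, Derivation.leibniz, pdeOp_inv_one_sub_X_one, map_sub, pdeOp_X_zero, pdeOp_X_one,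
    smul_eq_mul, smul_eq_mul]
  ring

lemma pdeOp_suby : pdeOp suby = 0 := by
  rw [suby, Derivation.leibniz, Derivation.leibniz, pdeOp_inv_one_sub_X_two, pdeOp_one_sub_X_one,
    pdeOp_X_two]
  simp only [smul_eq_mul]
  ring

lemma pdeOp_inv_one_sub_X_one_mul_one_sub_X_two :
    pdeOp ((1 - X 1) * (1 - X 2))⁻¹ =
      (1 + X 2) * (((1 - X 1) * (1 - X 2))⁻¹ : MvPowerSeries (Fin 3) ℂ) := by
  rw [pdeOp.map_eq_neg_mul_of_mul_eq_one (c := -(1 + X 2))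
    (MvPowerSeries.mul_inv_cancel _ (by simp)), neg_neg]
  rw [Derivation.leibniz, pdeOp_one_sub_X_one, pdeOp_one_sub_X_two, smul_eq_mul, smul_eq_mul]
  ring

noncomputable def comp2Trunc (H : MvPowerSeries (Fin 2) ℂ) (f g : MvPowerSeries (Fin 3) ℂ)
    (N : ℕ) : MvPowerSeries (Fin 3) ℂ :=
  ∑ p ∈ Finset.range (N + 1) ×ˢ Finset.range (N + 1),
    coeff (single 0 p.1 + single 1 p.2) H • (f ^ p.1 * g ^ p.2)

lemma coeff_comp2 (H : MvPowerSeries (Fin 2) ℂ) (f g : MvPowerSeries (Fin 3) ℂ)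
    (m : Fin 3 →₀ ℕ) :
    coeff m (comp2 H f g) = ∑ p ∈ Finset.range (degree m + 1) ×ˢ Finset.range (degree m + 1),
      coeff (single 0 p.1 + single 1 p.2) H * coeff m (f ^ p.1 * g ^ p.2) := rfl

lemma coeff_comp2Trunc (H : MvPowerSeries (Fin 2) ℂ) (f g : MvPowerSeries (Fin 3) ℂ)
    (N : ℕ) (m : Fin 3 →₀ ℕ) :
    coeff m (comp2Trunc H f g N) = ∑ p ∈ Finset.range (N + 1) ×ˢ Finset.range (N + 1),
      coeff (single 0 p.1 + single 1 p.2) H * coeff m (f ^ p.1 * g ^ p.2) := by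
  simp only [comp2Trunc, map_sum, map_smul, smul_eq_mul]

lemma le_order_comp2_sub_comp2Trunc (H : MvPowerSeries (Fin 2) ℂ) {f g : MvPowerSeries (Fin 3) ℂ}
    (hf : constantCoeff f = 0) (hg : constantCoeff g = 0) (N : ℕ) :
    (N + 1 : ℕ∞) ≤ (comp2 H f g - comp2Trunc H f g N).order := by
  refine le_order fun m hm => ?_
  have hmN : degree m ≤ N := by exact_mod_cast Order.le_of_lt_add_one hm
  rw [map_sub, sub_eq_zero, coeff_comp2, coeff_comp2Trunc]
  refine Finset.sum_subset (Finset.product_subset_product ?_ ?_) fun p hp hpm => ?_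
  · exact Finset.range_subset_range.mpr (by omega)
  · exact Finset.range_subset_range.mpr (by omega)
  · simp only [Finset.mem_product, Finset.mem_range, not_and_or, not_lt] at hp hpm
    rw [coeff_pow_mul_pow_eq_zero hf hg (by omega), mul_zero]

lemma Derivation.map_comp2_eq_zero
    (D : Derivation ℂ (MvPowerSeries (Fin 3) ℂ) (MvPowerSeries (Fin 3) ℂ))
    (hD : ∀ φ (n : ℕ), (n + 1 : ℕ∞) ≤ φ.order → (n : ℕ∞) ≤ (D φ).order)
    (H : MvPowerSeries (Fin 2) ℂ) {f g : MvPowerSeries (Fin 3) ℂ}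
    (hf : constantCoeff f = 0) (hg : constantCoeff g = 0) (hDf : D f = 0) (hDg : D g = 0) :
    D (comp2 H f g) = 0 := by
  ext m
  have hT : D (comp2Trunc H f g (degree m + 1)) = 0 := by
    simp only [comp2Trunc, map_sum, map_smul, Derivation.leibniz, Derivation.leibniz_pow, hDf,
      hDg, smul_zero, add_zero, Finset.sum_const_zero]
  have hlt : ((degree m : ℕ) : ℕ∞) <
      (D (comp2 H f g - comp2Trunc H f g (degree m + 1))).order :=
    lt_of_lt_of_le (b := ((degree m + 1 : ℕ) : ℕ∞)) (by exact_mod_cast Nat.lt_succ_self _)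
      (hD _ _ (le_order_comp2_sub_comp2Trunc H hf hg _))
  rw [map_sub, hT, sub_zero] at hlt
  rw [coeff_of_lt_order hlt, map_zero]

lemma pdeOp_FofH (H : MvPowerSeries (Fin 2) ℂ) : pdeOp (FofH H) = (1 + X 2) * FofH H := by
  have hcomp : pdeOp (comp2 H subx suby) = 0 :=
    pdeOp.map_comp2_eq_zero (fun _ _ => le_order_pdeOp) H (by simp [subx]) (by simp [suby])
      pdeOp_subx pdeOp_suby
  rw [FofH, Derivation.leibniz, hcomp, pdeOp_inv_one_sub_X_one_mul_one_sub_X_two, smul_zero,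
    zero_add, smul_eq_mul]
  ring

lemma X_one_pow_succ_dvd_of_pdeOp_eq {E : MvPowerSeries (Fin 3) ℂ}
    (hE : pdeOp E = (1 + X 2) * E) {j : ℕ} (hj : X 1 ^ (j + 1) ∣ E) : X 1 ^ (j + 2) ∣ E := by
  obtain ⟨G, rfl⟩ := hj
  have hX : (X 1 : MvPowerSeries (Fin 3) ℂ) ≠ 0 := fun h => by
    simpa using congr_arg (coeff (single 1 1)) h
  have hcancel : X 1 ^ j * (((j + 1 : ℕ) : MvPowerSeries (Fin 3) ℂ) * (1 - X 1) * G +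
      X 1 * pdeOp G - (1 + X 2) * X 1 * G) = 0 := by
    rw [Derivation.leibniz, Derivation.leibniz_pow, pdeOp_X_one, Nat.add_sub_cancel] at hE
    simp only [smul_eq_mul, nsmul_eq_mul] at hE
    linear_combination hE
  have hG : X 1 ∣ ((j + 1 : ℕ) : MvPowerSeries (Fin 3) ℂ) * G :=
    ⟨((j + 1 : ℕ) : MvPowerSeries (Fin 3) ℂ) * G + (1 + X 2) * G - pdeOp G, by
      linear_combination (mul_eq_zero.mp hcancel).resolve_left (pow_ne_zero j hX)⟩
  have hunit : IsUnit ((j + 1 : ℕ) : MvPowerSeries (Fin 3) ℂ) :=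
    isUnit_iff_constantCoeff.mpr (by simp [Nat.cast_add_one_ne_zero])
  rw [pow_succ]
  exact mul_dvd_mul_left _ (hunit.dvd_mul_left.mp hG)

lemma eq_zero_of_pdeOp_eq_of_X_one_dvd {E : MvPowerSeries (Fin 3) ℂ}
    (hE : pdeOp E = (1 + X 2) * E) (hX : X 1 ∣ E) : E = 0 := by
  have hpow : ∀ n, X 1 ^ (n + 1) ∣ E := fun n => by
    induction n with
    | zero => rwa [pow_one]
    | succ n ih => exact X_one_pow_succ_dvd_of_pdeOp_eq hE ih
  exact eq_zero_of_forall_X_pow_dvd (s := 1) fun n => (pow_dvd_pow _ n.le_succ).trans (hpow n)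

lemma X_dvd_comp2_sub_comp2 (s : Fin 3) (H : MvPowerSeries (Fin 2) ℂ)
    {f f' g g' : MvPowerSeries (Fin 3) ℂ} (hf : X s ∣ f - f') (hg : X s ∣ g - g') :
    X s ∣ comp2 H f g - comp2 H f' g' := by
  have hpow : ∀ p q : ℕ, X s ∣ f ^ p * g ^ q - f' ^ p * g' ^ q := fun p q => by
    rw [show f ^ p * g ^ q - f' ^ p * g' ^ q =
      (f ^ p - f' ^ p) * g ^ q + f' ^ p * (g ^ q - g' ^ q) by ring]
    exact dvd_add (dvd_mul_of_dvd_left (hf.trans (sub_dvd_pow_sub_pow _ _ _)) _)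
      (dvd_mul_of_dvd_right (hg.trans (sub_dvd_pow_sub_pow _ _ _)) _)
  refine X_dvd_iff.mpr fun m hm => ?_
  rw [map_sub, coeff_comp2, coeff_comp2, ← Finset.sum_sub_distrib]
  refine Finset.sum_eq_zero fun p _ => ?_
  rw [← mul_sub, ← map_sub, X_dvd_iff.mp (hpow p.1 p.2) m hm, mul_zero]

lemma X_one_dvd_FofH_sub (H : MvPowerSeries (Fin 2) ℂ) :
    X 1 ∣ FofH H - (1 - X 2)⁻¹ * comp2 H (X 0) (X 2 * (1 - X 2)⁻¹) := by
  set U : MvPowerSeries (Fin 3) ℂ := ((1 - X 1) * (1 - X 2))⁻¹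
  set W : MvPowerSeries (Fin 3) ℂ := (1 - X 2)⁻¹
  have hU : (1 - X 1) * (1 - X 2) * U = 1 := MvPowerSeries.mul_inv_cancel _ (by simp)
  have hW : (1 - X 2) * W = 1 := one_sub_X_mul_inv 2
  have hUW : U - W = X 1 * U := by linear_combination W * hU - (1 - X 1) * U * hW
  have hsubx : X 1 ∣ subx - X 0 := ⟨(1 - X 1)⁻¹ * (X 0 - 1), by
    rw [subx]; linear_combination X 0 * one_sub_X_mul_inv (σ := Fin 3) 1⟩
  have hsuby : X 1 ∣ suby - X 2 * W := ⟨-(X 2 * W), by rw [suby]; ring⟩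
  rw [FofH, show U * comp2 H subx suby - W * comp2 H (X 0) (X 2 * W) =
    (U - W) * comp2 H subx suby + W * (comp2 H subx suby - comp2 H (X 0) (X 2 * W)) by ring, hUW,
    mul_assoc]
  exact dvd_add (dvd_mul_right _ _) (dvd_mul_of_dvd_right (X_dvd_comp2_sub_comp2 1 H hsubx hsuby) _)

lemma coeff_single_two_X_two_pow_mul_eq_zero {ψ : MvPowerSeries (Fin 3) ℂ} {q k : ℕ}
    (hkq : k < q) : coeff (single 2 k) (X 2 ^ q * ψ) = 0 := by
  rw [X_pow_eq, coeff_monomial_mul, if_neg (by simpa using hkq)]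

lemma coeff_inv_one_sub_X_two_mul_comp2 (H : MvPowerSeries (Fin 2) ℂ) (i k : ℕ) :
    coeff (single 0 i + single 2 k)
        ((1 - X 2)⁻¹ * comp2 H (X 0) (X 2 * (1 - X 2)⁻¹)) =
      ∑ q ∈ Finset.range (k + 1), coeff (single 0 i + single 1 q) H *
        coeff (single 2 k) (X 2 ^ q * (1 - X 2)⁻¹ ^ (q + 1) : MvPowerSeries (Fin 3) ℂ) := by
  set W : MvPowerSeries (Fin 3) ℂ := (1 - X 2)⁻¹
  set m : Fin 3 →₀ ℕ := single 0 i + single 2 k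
  set N := i + k
  have hdeg : degree m = N := by simp [m, N]
  have htrunc : coeff m (W * comp2 H (X 0) (X 2 * W)) =
      coeff m (W * comp2Trunc H (X 0) (X 2 * W) N) := by
    have hord := (le_order_comp2_sub_comp2Trunc H (f := X 0) (g := X 2 * W) (by simp)
      (by simp) N).trans (le_add_self.trans (le_order_mul (f := W)))
    have hlt : ((degree m : ℕ) : ℕ∞) < (N : ℕ∞) + 1 := by
      rw [hdeg]; exact_mod_cast Nat.lt_succ_self N
    have := coeff_of_lt_order (hlt.trans_le hord)
    rwa [mul_sub, map_sub, sub_eq_zero] at this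
  have hψ : ∀ q : ℕ, pderiv ℂ 0 (X 2 ^ q * W ^ (q + 1)) = 0 := fun q => by
    simp [W, Derivation.leibniz_pow]
  have hterm : ∀ p q : ℕ, coeff m (W * (X 0 ^ p * (X 2 * W) ^ q)) =
      if p = i then coeff (single 2 k) (X 2 ^ q * W ^ (q + 1)) else 0 := fun p q => by
    rw [show W * (X 0 ^ p * (X 2 * W) ^ q) = X 0 ^ p * (X 2 ^ q * W ^ (q + 1)) by ring]
    exact coeff_X_pow_mul_of_pderiv_eq_zero (hψ q) p i (by simp)
  rw [htrunc, comp2Trunc, Finset.mul_sum, map_sum, Finset.sum_product,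
    Finset.sum_eq_single_of_mem i (Finset.mem_range.mpr (by omega))]
  · simp only [mul_smul_comm, map_smul, hterm, if_true, smul_eq_mul]
    have hkN : Finset.range (k + 1) ⊆ Finset.range (N + 1) :=
      Finset.range_subset_range.mpr (by omega)
    exact (Finset.sum_subset hkN fun q _ hq => by
      rw [coeff_single_two_X_two_pow_mul_eq_zero (by simpa using hq), mul_zero]).symm
  · intro p _ hpi
    simp [map_smul, hterm, hpi]

lemma exists_X_one_dvd_sub_FofH (F : MvPowerSeries (Fin 3) ℂ) : ∃ H, X 1 ∣ F - FofH H := by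
  let c : ℕ → ℕ → ℂ := fun q k =>
    coeff (single 2 k) (X 2 ^ q * (1 - X 2)⁻¹ ^ (q + 1) : MvPowerSeries (Fin 3) ℂ)
  have hc : ∀ k, c k k = 1 := fun k => by
    simp [c, X_pow_eq, coeff_monomial_mul]
  let H : MvPowerSeries (Fin 2) ℂ := fun n =>
    unitriangularSolve c (fun k => coeff (single 0 (n 0) + single 2 k) F) (n 1)
  have hH : ∀ i q, coeff (single 0 i + single 1 q) H =
      unitriangularSolve c (fun k => coeff (single 0 i + single 2 k) F) q := fun i q => by
    change unitriangularSolve c _ ((single 0 i + single 1 q : Fin 2 →₀ ℕ) 1) = _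
    simp
  refine ⟨H, X_dvd_iff.mpr fun m hm => ?_⟩
  have hm' : m = single 0 (m 0) + single 2 (m 2) := by
    ext t; fin_cases t <;> simp [hm]
  have hslice := X_dvd_iff.mp (X_one_dvd_FofH_sub H) m hm
  rw [map_sub, sub_eq_zero] at hslice ⊢
  rw [hslice, hm', coeff_inv_one_sub_X_two_mul_comp2]
  simp only [hH]
  exact (sum_range_unitriangularSolve_mul c hc
    (fun k => coeff (single 0 (m 0) + single 2 k) F) (m 2)).symm

/-- Conversely, if `F` satisfies the PDE
`(1-w₁)F_{w₁} + (1-w₂)F_{w₂} + w₃(1-w₃)F_{w₃} = (1+w₃)F`, then there is a two-variable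
power series `H(x,y)` with `F = H((w₁-w₂)/(1-w₂), w₃(1-w₂)/(1-w₃))/((1-w₂)(1-w₃))`. -/
theorem pde_implies_FofH (F : MvPowerSeries (Fin 3) ℂ)
    (hF : (1 - X 0) * pderiv3 0 F + (1 - X 1) * pderiv3 1 F +
        X 2 * (1 - X 2) * pderiv3 2 F = (1 + X 2) * F) :
    ∃ H : MvPowerSeries (Fin 2) ℂ, F = FofH H := by
  obtain ⟨H, hH⟩ := exists_X_one_dvd_sub_FofH F
  have hpdeF : pdeOp F = (1 + X 2) * F := by
    simpa only [pdeOp_apply, pderiv3_eq_pderiv] using hF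
  have hpde : pdeOp (F - FofH H) = (1 + X 2) * (F - FofH H) := by
    rw [map_sub, hpdeF, pdeOp_FofH, mul_sub]
  exact ⟨H, sub_eq_zero.mp (eq_zero_of_pdeOp_eq_of_X_one_dvd hpde hH)⟩
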